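/- arXiv:1303.0808 — 6 statements merged into one kernel-verified Lean document; each statement's English description precedes it below -/
import Mathlib

section
/- Let σ be a d×d positive semidefinite complex matrix with Tr σ ≤ 1 (a subnormalized state), and let Π₁, …, Π_M be orthogonal projection matrices (Hermitian with Π² = Π) on ℂ^d. Then Tr{σ} − Tr{Π_M ⋯ Π₁ σ Π₁ ⋯ Π_M} ≤ 2·√( Σ_{m=1}^{M} Tr{(I − Π_m) σ} ). -/
/-!
Write `σ = X Xᴴ` and view `X` as a vector of the Hilbert–Schmidt space, in which
`Tr σ = ‖X‖²`, `Tr (Π_M ⋯ Π₁ σ Π₁ ⋯ Π_M) = ‖Π_M ⋯ Π₁ X‖²` and `Tr ((I - Π) σ) = ‖(I - Π) X‖²`,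
left multiplication by an orthogonal projection being an orthogonal projection there.
Since `1 - T Q = (1 - T) + T (1 - Q)` with orthogonal summands and `T` contracting, induction gives
`‖X - Π_M ⋯ Π₁ X‖² ≤ ∑ₘ ‖(I - Π_m) X‖²`, and then
`‖X‖² - ‖Π_M ⋯ Π₁ X‖² ≤ (‖X‖ + ‖Π_M ⋯ Π₁ X‖) ‖X - Π_M ⋯ Π₁ X‖ ≤ 2 ‖X - Π_M ⋯ Π₁ X‖`.
-/

open Matrix ComplexOrder

namespace LinearMap.IsSymmetricProjection

variable {𝕜 E : Type*} [RCLike 𝕜] [SeminormedAddCommGroup E] [InnerProductSpace 𝕜 E]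
  {T : E →ₗ[𝕜] E}

theorem one_sub (hT : T.IsSymmetricProjection) : (1 - T).IsSymmetricProjection :=
  ⟨hT.isIdempotentElem.one_sub, IsSymmetric.one.sub hT.isSymmetric⟩

theorem inner_apply_one_sub_apply (hT : T.IsSymmetricProjection) (x y : E) :
    inner 𝕜 (T x) ((1 - T) y) = 0 := by
  rw [hT.isSymmetric, ← Module.End.mul_apply, mul_sub, mul_one, hT.isIdempotentElem.eq,
    sub_self, zero_apply, inner_zero_right]

theorem norm_apply_sq (hT : T.IsSymmetricProjection) (x : E) :
    ‖T x‖ ^ 2 = RCLike.re (inner 𝕜 x (T x)) := by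
  rw [norm_sq_eq_re_inner (𝕜 := 𝕜), hT.isSymmetric, ← Module.End.mul_apply,
    hT.isIdempotentElem.eq]

theorem norm_apply_sq_add_norm_one_sub_apply_sq (hT : T.IsSymmetricProjection) (x : E) :
    ‖T x‖ ^ 2 + ‖(1 - T) x‖ ^ 2 = ‖x‖ ^ 2 := by
  have h := norm_add_sq_eq_norm_sq_add_norm_sq_of_inner_eq_zero _ _
    (hT.inner_apply_one_sub_apply x x)
  simp only [LinearMap.sub_apply, Module.End.one_apply, add_sub_cancel] at h ⊢
  rw [sq, sq, sq, h]

theorem norm_apply_le (hT : T.IsSymmetricProjection) (x : E) : ‖T x‖ ≤ ‖x‖ :=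
  sq_le_sq₀ (norm_nonneg _) (norm_nonneg _) |>.mp <| by
    linarith [hT.norm_apply_sq_add_norm_one_sub_apply_sq x, sq_nonneg ‖(1 - T) x‖]

end LinearMap.IsSymmetricProjection

section UnionBound

variable {𝕜 E : Type*} [RCLike 𝕜] [SeminormedAddCommGroup E] [InnerProductSpace 𝕜 E]

theorem norm_list_prod_apply_le {l : List (E →ₗ[𝕜] E)}
    (hl : ∀ T ∈ l, T.IsSymmetricProjection) (x : E) : ‖l.prod x‖ ≤ ‖x‖ := by
  induction l with
  | nil => simp
  | cons T l ih =>
    rw [List.prod_cons, Module.End.mul_apply]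
    exact ((hl T List.mem_cons_self).norm_apply_le _).trans
      (ih fun S hS => hl S (List.mem_cons_of_mem _ hS))

theorem norm_one_sub_list_prod_apply_sq_le {l : List (E →ₗ[𝕜] E)}
    (hl : ∀ T ∈ l, T.IsSymmetricProjection) (x : E) :
    ‖(1 - l.prod) x‖ ^ 2 ≤ (l.map fun T => ‖(1 - T) x‖ ^ 2).sum := by
  induction l with
  | nil => simp
  | cons T l ih =>
    have hT := hl T List.mem_cons_self
    have hsplit : (1 - T * l.prod) x = T ((1 - l.prod) x) + (1 - T) x := by
      simp only [LinearMap.sub_apply, Module.End.one_apply, Module.End.mul_apply, map_sub]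
      abel
    have horth := norm_add_sq_eq_norm_sq_add_norm_sq_of_inner_eq_zero _ _
      (hT.inner_apply_one_sub_apply ((1 - l.prod) x) x)
    have hshort := pow_le_pow_left₀ (norm_nonneg _) (hT.norm_apply_le ((1 - l.prod) x)) 2
    rw [List.prod_cons, hsplit, List.map_cons, List.sum_cons]
    nlinarith [ih fun S hS => hl S (List.mem_cons_of_mem _ hS)]

theorem norm_sq_sub_norm_list_prod_apply_sq_le {l : List (E →ₗ[𝕜] E)}
    (hl : ∀ T ∈ l, T.IsSymmetricProjection) {x : E} (hx : ‖x‖ ≤ 1) :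
    ‖x‖ ^ 2 - ‖l.prod x‖ ^ 2 ≤ 2 * √(l.map fun T => ‖(1 - T) x‖ ^ 2).sum := by
  have hcontr := norm_list_prod_apply_le hl x
  have hdefect : ‖x‖ - ‖l.prod x‖ ≤ √(l.map fun T => ‖(1 - T) x‖ ^ 2).sum := by
    calc ‖x‖ - ‖l.prod x‖ ≤ ‖(1 - l.prod) x‖ := by
          simpa using norm_sub_norm_le x (l.prod x)
      _ ≤ _ := Real.le_sqrt_of_sq_le (norm_one_sub_list_prod_apply_sq_le hl x)
  nlinarith [norm_nonneg (l.prod x)]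

end UnionBound

namespace Matrix

section HilbertSchmidt

variable {𝕜 n : Type*} [RCLike 𝕜] [Fintype n] [DecidableEq n]

noncomputable local instance : SeminormedAddCommGroup (Matrix n n 𝕜) :=
  toMatrixSeminormedAddCommGroup 1 PosSemidef.one

noncomputable local instance : InnerProductSpace 𝕜 (Matrix n n 𝕜) :=
  toMatrixInnerProductSpace 1 PosSemidef.one

theorem hilbertSchmidt_inner_eq_trace (X Y : Matrix n n 𝕜) : inner 𝕜 X Y = (Y * Xᴴ).trace := by
  change (Y * 1 * Xᴴ).trace = _
  rw [mul_one]

theorem hilbertSchmidt_norm_sq_eq_re_trace (X : Matrix n n 𝕜) :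
    ‖X‖ ^ 2 = RCLike.re (X * Xᴴ).trace := by
  rw [norm_sq_eq_re_inner (𝕜 := 𝕜), hilbertSchmidt_inner_eq_trace]

theorem isSymmetricProjection_mulLeft {P : Matrix n n 𝕜} (hP : P.IsHermitian) (hPP : P * P = P) :
    (LinearMap.mulLeft 𝕜 P).IsSymmetricProjection where
  isIdempotentElem := LinearMap.ext fun X => by
    rw [Module.End.mul_apply, LinearMap.mulLeft_apply, LinearMap.mulLeft_apply, ← mul_assoc, hPP]
  isSymmetric X Y := by
    simp only [LinearMap.mulLeft_apply, hilbertSchmidt_inner_eq_trace, conjTranspose_mul, hP.eq]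
    rw [← mul_assoc, trace_mul_comm, mul_assoc]

theorem hilbertSchmidt_norm_one_sub_mulLeft_apply_sq {P : Matrix n n 𝕜} (hP : P.IsHermitian)
    (hPP : P * P = P) (X : Matrix n n 𝕜) :
    ‖(1 - LinearMap.mulLeft 𝕜 P) X‖ ^ 2 = RCLike.re ((1 - P) * (X * Xᴴ)).trace := by
  rw [(isSymmetricProjection_mulLeft hP hPP).one_sub.norm_apply_sq, hilbertSchmidt_inner_eq_trace,
    LinearMap.sub_apply, Module.End.one_apply, LinearMap.mulLeft_apply, ← one_sub_mul, mul_assoc]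

theorem re_trace_sub_re_trace_list_prod_mul_mul_le {σ : Matrix n n 𝕜} (hσ : σ.PosSemidef)
    (hσtr : RCLike.re σ.trace ≤ 1) {L : List (Matrix n n 𝕜)}
    (hL : ∀ P ∈ L, P.IsHermitian ∧ P * P = P) :
    RCLike.re σ.trace - RCLike.re (L.prod * σ * L.prodᴴ).trace
      ≤ 2 * √(L.map fun P => RCLike.re ((1 - P) * σ).trace).sum := by
  obtain ⟨X, rfl⟩ : ∃ X : Matrix n n 𝕜, σ = X * Xᴴ := by
    open scoped MatrixOrder in exact CStarAlgebra.nonneg_iff_eq_mul_star_self.mp hσ.nonneg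
  have hl : ∀ T ∈ L.map (LinearMap.mulLeft 𝕜), T.IsSymmetricProjection := by
    intro T hT
    obtain ⟨P, hP, rfl⟩ := List.mem_map.mp hT
    exact isSymmetricProjection_mulLeft (hL P hP).1 (hL P hP).2
  have hprod : (L.map (LinearMap.mulLeft 𝕜)).prod = LinearMap.mulLeft 𝕜 L.prod :=
    (map_list_prod (Algebra.lmul 𝕜 (Matrix n n 𝕜)) L).symm
  have hX : ‖X‖ ≤ 1 := by
    rw [← sq_le_one_iff₀ (norm_nonneg X), hilbertSchmidt_norm_sq_eq_re_trace]
    exact hσtr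
  have hbound := norm_sq_sub_norm_list_prod_apply_sq_le hl hX
  rw [hprod, List.map_map, hilbertSchmidt_norm_sq_eq_re_trace, LinearMap.mulLeft_apply,
    hilbertSchmidt_norm_sq_eq_re_trace] at hbound
  have htrace : L.prod * (X * Xᴴ) * L.prodᴴ = L.prod * X * (L.prod * X)ᴴ := by
    rw [conjTranspose_mul, mul_assoc, mul_assoc, mul_assoc]
  have hsum : (L.map fun P => RCLike.re ((1 - P) * (X * Xᴴ)).trace)
      = L.map ((fun T => ‖(1 - T) X‖ ^ 2) ∘ LinearMap.mulLeft 𝕜) :=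
    List.map_congr_left fun P hP =>
      (hilbertSchmidt_norm_one_sub_mulLeft_apply_sq (hL P hP).1 (hL P hP).2 X).symm
  rwa [htrace, hsum]

end HilbertSchmidt

end Matrix

/-- **Sen's non-commutative union bound.**
For a subnormalized state `σ` (positive semidefinite with `Tr σ ≤ 1`) and orthogonal
projections `Π₁, …, Π_M`, we have
`Tr σ − Tr (Π_M ⋯ Π₁ σ Π₁ ⋯ Π_M) ≤ 2 √(∑ₘ Tr ((I − Π_m) σ))`. -/
theorem sen_noncommutative_union_bound {d M : ℕ}
    (σ : Matrix (Fin d) (Fin d) ℂ) (hσ : σ.PosSemidef) (hσtr : σ.trace.re ≤ 1)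
    (P : Fin M → Matrix (Fin d) (Fin d) ℂ)
    (hherm : ∀ m, (P m).IsHermitian) (hproj : ∀ m, P m * P m = P m) :
    σ.trace.re - ((List.ofFn P).reverse.prod * σ * (List.ofFn P).prod).trace.re
      ≤ 2 * Real.sqrt (∑ m, (((1 : Matrix (Fin d) (Fin d) ℂ) - P m) * σ).trace.re) := by
  have hL : ∀ Q ∈ (List.ofFn P).reverse, Q.IsHermitian ∧ Q * Q = Q := by
    simp only [List.mem_reverse, List.mem_ofFn]
    rintro _ ⟨m, rfl⟩
    exact ⟨hherm m, hproj m⟩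
  have hadj : ((List.ofFn P).reverse.prod)ᴴ = (List.ofFn P).prod := by
    rw [conjTranspose_list_prod, List.map_reverse, List.reverse_reverse, List.map_ofFn]
    exact congrArg _ (congrArg _ (funext fun m => (hherm m).eq))
  have hsum : ((List.ofFn P).reverse.map fun Q => RCLike.re ((1 - Q) * σ).trace).sum
      = ∑ m, ((1 - P m) * σ).trace.re := by
    rw [List.map_reverse, List.sum_reverse, List.map_ofFn, List.sum_ofFn]
    rfl
  have hbound := re_trace_sub_re_trace_list_prod_mul_mul_le hσ hσtr hL
  rwa [hadj, hsum] at hbound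
end

section
/- Let σ be a d×d positive semidefinite complex matrix with Tr σ ≤ 1 (a subnormalized state), and let Λ₁, …, Λ_M be d×d complex matrices with 0 ≤ Λ_m ≤ I for all m ∈ {1,…,M}. Then there exist orthogonal projections Π₁, …, Π_M on the extended space ℂ^d ⊗ (ℂ²)^{⊗M} satisfying Tr{Π_m (τ ⊗ |0̄⟩⟨0̄|)} = Tr{Λ_m τ} for every d×d matrix τ (where |0̄⟩ = |0⟩^{⊗M} is the all-zeros state of M qubit probes), such that Tr{σ} − Tr{Π_M ⋯ Π₁ (σ ⊗ |0̄⟩⟨0̄|) Π₁ ⋯ Π_M} ≤ 2·√( Σ_{m=1}^{M} Tr{(I − Λ_m) σ} ). -/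
open Matrix Kronecker ComplexOrder

/-- The projection `|0̄⟩⟨0̄|` onto the all-zeros computational basis state of `M` qubit
probe systems. -/
def probeZero (M : ℕ) : Matrix (Fin M → Fin 2) (Fin M → Fin 2) ℂ :=
  Matrix.single (fun _ => 0) (fun _ => 0) 1

/-!
Naimark: for `0 ≤ Λ ≤ I` and an ancilla state `w ≠ 0̄`, the map
`V = (I ⊗ |0̄⟩) √Λ + (I ⊗ |w⟩) √(I - Λ)` is an isometry, so `Π = V Vᴴ` is a projection whose
compression `(I ⊗ ⟨0̄|) Π (I ⊗ |0̄⟩)` is `Λ`.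

Sen: for projections `Π₁, …, Π_M` and `B = Π_M ⋯ Π₁`, splitting `1 - Π B'` into the orthogonal
pieces `(1 - Π)` and `Π (1 - B')` gives the operator inequality `(1 - B)ᴴ (1 - B) ≤ ∑ₘ (1 - Πₘ)`.
For `ρ = σ ⊗ |0̄⟩⟨0̄|`, Cauchy–Schwarz for the semi-inner product `⟪X, Y⟫ = Tr (Y ρ Xᴴ)` gives
`Tr ρ - Tr (B ρ Bᴴ) = ‖1‖² - ‖B‖² ≤ 2 ‖1‖ ‖1 - B‖ ≤ 2 √(∑ₘ Tr ((1 - Πₘ) ρ))`, and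
`Tr ((1 - Πₘ) ρ) = Tr ((I - Λₘ) σ)` by the Naimark property.
-/

theorem norm_sq_sub_norm_sub_sq_le {𝕜 E : Type*} [RCLike 𝕜] [SeminormedAddCommGroup E]
    [InnerProductSpace 𝕜 E] (x y : E) : ‖x‖ ^ 2 - ‖x - y‖ ^ 2 ≤ 2 * ‖x‖ * ‖y‖ := by
  rw [norm_sub_sq (𝕜 := 𝕜)]
  nlinarith [re_inner_le_norm (𝕜 := 𝕜) x y, sq_nonneg ‖y‖]

theorem star_list_prod_reverse_of_isSelfAdjoint {R : Type*} [Monoid R] [StarMul R] {l : List R}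
    (hl : ∀ p ∈ l, IsSelfAdjoint p) : star l.reverse.prod = l.prod := by
  induction l with
  | nil => simp
  | cons p l ih =>
    rw [List.reverse_cons, List.prod_append, star_mul, List.prod_singleton,
      (hl p List.mem_cons_self).star_eq, ih fun q hq => hl q (List.mem_cons_of_mem p hq),
      List.prod_cons]

section StarProjection

variable {R : Type*} [Ring R] [StarRing R]

theorem IsStarProjection.star_mul_self_one_sub_mul {p : R} (hp : IsStarProjection p) (x : R) :
    star (1 - p * x) * (1 - p * x) = (1 - p) + star (1 - x) * p * (1 - x) := by
  have hexpand : star (1 - p * x) * (1 - p * x) =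
      (1 - p) * (1 - p) + (1 - p) * p * (1 - x) + star (1 - x) * (p * (1 - p))
        + star (1 - x) * (p * p) * (1 - x) := by
    rw [show 1 - p * x = (1 - p) + p * (1 - x) by noncomm_ring, star_add, star_mul,
      star_sub, star_one, hp.isSelfAdjoint.star_eq]
    noncomm_ring
  rw [hexpand, hp.one_sub.isIdempotentElem.eq, hp.one_sub_mul_self, hp.mul_one_sub_self,
    hp.isIdempotentElem.eq]
  noncomm_ring

variable [PartialOrder R] [StarOrderedRing R]

/-- Operator form of Sen's non-commutative union bound. -/
theorem star_mul_self_one_sub_list_prod_le {l : List R} (hl : ∀ p ∈ l, IsStarProjection p) :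
    star (1 - l.prod) * (1 - l.prod) ≤ (l.map (1 - ·)).sum := by
  induction l with
  | nil => simp
  | cons p l ih =>
    have hp := hl p List.mem_cons_self
    rw [List.prod_cons, hp.star_mul_self_one_sub_mul, List.map_cons, List.sum_cons]
    gcongr
    calc star (1 - l.prod) * p * (1 - l.prod) ≤ star (1 - l.prod) * 1 * (1 - l.prod) :=
          star_left_conjugate_le_conjugate hp.le_one _
      _ ≤ _ := by
          rw [mul_one]
          exact ih fun q hq => hl q (List.mem_cons_of_mem p hq)

end StarProjection

namespace Matrix

section Trace

variable {n : Type*} [Fintype n] [DecidableEq n]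

theorem PosSemidef.re_trace_sub_re_trace_conj_le {ρ : Matrix n n ℂ} (hρ : ρ.PosSemidef)
    (A : Matrix n n ℂ) :
    ρ.trace.re - ((1 - A) * ρ * (1 - A)ᴴ).trace.re
      ≤ 2 * √ρ.trace.re * √(A * ρ * Aᴴ).trace.re := by
  let _ := ρ.toMatrixSeminormedAddCommGroup hρ
  let _ := ρ.toMatrixInnerProductSpace hρ
  have hsq (X : Matrix n n ℂ) : ‖X‖ ^ 2 = (X * ρ * Xᴴ).trace.re :=
    norm_sq_eq_re_inner (𝕜 := ℂ) X
  have hnorm (X : Matrix n n ℂ) : ‖X‖ = √(X * ρ * Xᴴ).trace.re := rfl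
  have := norm_sq_sub_norm_sub_sq_le (𝕜 := ℂ) (1 : Matrix n n ℂ) A
  rwa [hsq, hsq, hnorm 1, hnorm A, conjTranspose_one, Matrix.one_mul, Matrix.mul_one] at this

open scoped MatrixOrder in
theorem re_trace_mul_le_re_trace_mul_of_le {X Y ρ : Matrix n n ℂ} (hXY : X ≤ Y)
    (hρ : ρ.PosSemidef) : (X * ρ).trace.re ≤ (Y * ρ).trace.re := by
  have hconj : 0 ≤ CFC.sqrt (Y - X) * ρ * CFC.sqrt (Y - X) :=
    conjugate_nonneg_of_nonneg hρ.nonneg (CFC.sqrt_nonneg _)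
  have htrace := (Complex.nonneg_iff.mp hconj.posSemidef.trace_nonneg).1
  rw [trace_mul_cycle, CFC.sqrt_mul_sqrt_self _ (sub_nonneg.mpr hXY), Matrix.sub_mul, trace_sub,
    Complex.sub_re] at htrace
  linarith

theorem re_trace_list_sum_mul (ρ : Matrix n n ℂ) (l : List (Matrix n n ℂ)) :
    (l.sum * ρ).trace.re = (l.map fun X => (X * ρ).trace.re).sum := by
  induction l with
  | nil => simp
  | cons X l ih => simp [Matrix.add_mul, ih]

open scoped MatrixOrder in
theorem PosSemidef.re_trace_sub_re_trace_list_prod_conj_le {ρ : Matrix n n ℂ}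
    (hρ : ρ.PosSemidef) {l : List (Matrix n n ℂ)} (hl : ∀ p ∈ l, IsStarProjection p) :
    ρ.trace.re - (l.reverse.prod * ρ * l.prod).trace.re
      ≤ 2 * √ρ.trace.re * √(l.map fun p => ((1 - p) * ρ).trace.re).sum := by
  have hstar : (l.reverse.prod)ᴴ = l.prod :=
    star_list_prod_reverse_of_isSelfAdjoint fun p hp => (hl p hp).isSelfAdjoint
  have hsen : star (1 - l.reverse.prod) * (1 - l.reverse.prod) ≤ (l.reverse.map (1 - ·)).sum :=
    star_mul_self_one_sub_list_prod_le fun p hp => hl p (List.mem_reverse.mp hp)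
  have hgentle := hρ.re_trace_sub_re_trace_conj_le (1 - l.reverse.prod)
  rw [sub_sub_cancel, hstar, trace_mul_cycle (1 - l.reverse.prod)] at hgentle
  refine hgentle.trans ?_
  gcongr
  refine (re_trace_mul_le_re_trace_mul_of_le hsen hρ).trans_eq ?_
  rw [re_trace_list_sum_mul, List.map_reverse, List.map_reverse, List.sum_reverse, List.map_map]
  rfl

end Trace

section Naimark

variable {m n ι R : Type*} [Fintype n] [DecidableEq n] [DecidableEq ι]

theorem isStarProjection_mul_conjTranspose_self [Fintype m] [Semiring R] [StarRing R]
    {V : Matrix m n R} (hV : Vᴴ * V = 1) : IsStarProjection (V * Vᴴ) where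
  isIdempotentElem := by
    rw [IsIdempotentElem, Matrix.mul_assoc, ← Matrix.mul_assoc Vᴴ, hV, Matrix.one_mul]
  isSelfAdjoint := by
    rw [IsSelfAdjoint, star_eq_conjTranspose, conjTranspose_mul, conjTranspose_conjTranspose]

variable (n R) in
/-- `ancillaIsometry n R z` is `I ⊗ |z⟩`, mapping `|j⟩` to `|j⟩ ⊗ |z⟩`. -/
def ancillaIsometry [Zero R] [One R] (z : ι) : Matrix (n × ι) n R :=
  of fun p j => if p = (j, z) then 1 else 0

theorem ancillaIsometry_mul_mul_conjTranspose [CommSemiring R] [StarRing R] (z : ι)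
    (τ : Matrix n n R) :
    ancillaIsometry n R z * τ * (ancillaIsometry n R z)ᴴ = τ ⊗ₖ single z z 1 := by
  ext ⟨i, s⟩ ⟨j, t⟩
  simp [ancillaIsometry, mul_apply, single_apply, apply_ite (star : R → R), ite_and, eq_comm]
  split_ifs <;> rfl

variable [Fintype ι]

theorem conjTranspose_ancillaIsometry_mul_self [CommSemiring R] [StarRing R] (z : ι) :
    (ancillaIsometry n R z)ᴴ * ancillaIsometry n R z = 1 := by
  ext i j
  simp [ancillaIsometry, mul_apply, one_apply, apply_ite (star : R → R), eq_comm]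

theorem conjTranspose_ancillaIsometry_mul_of_ne [CommSemiring R] [StarRing R] {z w : ι}
    (h : z ≠ w) : (ancillaIsometry n R z)ᴴ * ancillaIsometry n R w = 0 := by
  ext i j
  simp [ancillaIsometry, mul_apply, apply_ite (star : R → R), h.symm]

open scoped MatrixOrder in
theorem exists_isStarProjection_conj_ancillaIsometry_eq {Λ : Matrix n n ℂ} (hΛ : Λ.PosSemidef)
    (hΛI : (1 - Λ).PosSemidef) {z w : ι} (hzw : z ≠ w) :
    ∃ P : Matrix (n × ι) (n × ι) ℂ, IsStarProjection P ∧
      (ancillaIsometry n ℂ z)ᴴ * P * ancillaIsometry n ℂ z = Λ := by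
  have hK₀ : (CFC.sqrt Λ)ᴴ = CFC.sqrt Λ := (CFC.sqrt_nonneg Λ).posSemidef.1
  have hK₁ : (CFC.sqrt (1 - Λ))ᴴ = CFC.sqrt (1 - Λ) := (CFC.sqrt_nonneg (1 - Λ)).posSemidef.1
  set V := ancillaIsometry n ℂ z * CFC.sqrt Λ + ancillaIsometry n ℂ w * CFC.sqrt (1 - Λ)
  have hJ₀V : (ancillaIsometry n ℂ z)ᴴ * V = CFC.sqrt Λ := by
    rw [Matrix.mul_add, ← Matrix.mul_assoc, ← Matrix.mul_assoc,
      conjTranspose_ancillaIsometry_mul_self, conjTranspose_ancillaIsometry_mul_of_ne hzw,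
      Matrix.one_mul, Matrix.zero_mul, add_zero]
  have hJ₁V : (ancillaIsometry n ℂ w)ᴴ * V = CFC.sqrt (1 - Λ) := by
    rw [Matrix.mul_add, ← Matrix.mul_assoc, ← Matrix.mul_assoc,
      conjTranspose_ancillaIsometry_mul_self, conjTranspose_ancillaIsometry_mul_of_ne hzw.symm,
      Matrix.one_mul, Matrix.zero_mul, zero_add]
  have hV : Vᴴ * V = 1 := by
    rw [conjTranspose_add, Matrix.add_mul, conjTranspose_mul, conjTranspose_mul,
      Matrix.mul_assoc, Matrix.mul_assoc, hJ₀V, hJ₁V, hK₀, hK₁,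
      CFC.sqrt_mul_sqrt_self Λ hΛ.nonneg, CFC.sqrt_mul_sqrt_self (1 - Λ) hΛI.nonneg,
      add_sub_cancel]
  have hVJ₀ : Vᴴ * ancillaIsometry n ℂ z = CFC.sqrt Λ := by
    rw [← hK₀, ← hJ₀V, conjTranspose_mul, conjTranspose_conjTranspose]
  refine ⟨V * Vᴴ, isStarProjection_mul_conjTranspose_self hV, ?_⟩
  rw [← Matrix.mul_assoc, hJ₀V, Matrix.mul_assoc, hVJ₀]
  exact CFC.sqrt_mul_sqrt_self Λ hΛ.nonneg

end Naimark

end Matrix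

/-- **Non-commutative union bound for general measurements (POVMs).**
For a subnormalized state `σ` and operators `0 ≤ Λ_m ≤ I`, there are orthogonal projections
`Π_m` on the extended space `ℂ^d ⊗ (ℂ²)^{⊗M}` that are Naimark extensions of the `Λ_m`
(i.e. `Tr (Π_m (τ ⊗ |0̄⟩⟨0̄|)) = Tr (Λ_m τ)` for all `τ`) and satisfy
`Tr σ − Tr (Π_M ⋯ Π₁ (σ ⊗ |0̄⟩⟨0̄|) Π₁ ⋯ Π_M) ≤ 2 √(∑ₘ Tr ((I − Λ_m) σ))`. -/
theorem noncommutative_union_bound_povm {d M : ℕ}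
    (σ : Matrix (Fin d) (Fin d) ℂ) (hσ : σ.PosSemidef) (hσtr : σ.trace.re ≤ 1)
    (Λ : Fin M → Matrix (Fin d) (Fin d) ℂ)
    (hΛ : ∀ m, (Λ m).PosSemidef)
    (hΛI : ∀ m, ((1 : Matrix (Fin d) (Fin d) ℂ) - Λ m).PosSemidef) :
    ∃ P : Fin M → Matrix (Fin d × (Fin M → Fin 2)) (Fin d × (Fin M → Fin 2)) ℂ,
      (∀ m, (P m).IsHermitian) ∧ (∀ m, P m * P m = P m) ∧
      (∀ m (τ : Matrix (Fin d) (Fin d) ℂ),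
        (P m * (τ ⊗ₖ probeZero M)).trace = (Λ m * τ).trace) ∧
      σ.trace.re -
          ((List.ofFn P).reverse.prod * (σ ⊗ₖ probeZero M) * (List.ofFn P).prod).trace.re
        ≤ 2 * Real.sqrt (∑ m, (((1 : Matrix (Fin d) (Fin d) ℂ) - Λ m) * σ).trace.re) := by
  set J := ancillaIsometry (Fin d) ℂ (fun _ : Fin M => (0 : Fin 2))
  have hJ (τ : Matrix (Fin d) (Fin d) ℂ) : τ ⊗ₖ probeZero M = J * τ * Jᴴ :=
    (ancillaIsometry_mul_mul_conjTranspose _ τ).symm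
  choose P hP hPΛ using fun m : Fin M =>
    exists_isStarProjection_conj_ancillaIsometry_eq (hΛ m) (hΛI m)
      (z := fun _ => (0 : Fin 2)) (w := Pi.single m 1) fun h => by simpa using congrFun h m
  have hNaimark (m) (τ : Matrix (Fin d) (Fin d) ℂ) :
      (P m * (τ ⊗ₖ probeZero M)).trace = (Λ m * τ).trace := by
    rw [hJ, ← Matrix.mul_assoc, ← Matrix.mul_assoc, trace_mul_cycle, ← Matrix.mul_assoc, hPΛ]
  have hρ : (σ ⊗ₖ probeZero M).PosSemidef := hJ σ ▸ hσ.mul_mul_conjTranspose_same J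
  have htrρ : (σ ⊗ₖ probeZero M).trace = σ.trace := by
    rw [hJ, trace_mul_cycle, conjTranspose_ancillaIsometry_mul_self, Matrix.one_mul]
  have herr (m) : ((1 - P m) * (σ ⊗ₖ probeZero M)).trace = ((1 - Λ m) * σ).trace := by
    rw [Matrix.sub_mul, Matrix.sub_mul, Matrix.one_mul, Matrix.one_mul, trace_sub, trace_sub,
      htrρ, hNaimark]
  refine ⟨P, fun m => (hP m).isSelfAdjoint, fun m => (hP m).isIdempotentElem, hNaimark, ?_⟩
  have hsen := hρ.re_trace_sub_re_trace_list_prod_conj_le (l := List.ofFn P)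
    (by simpa [List.mem_ofFn] using hP)
  rw [htrρ, List.map_ofFn, List.sum_ofFn] at hsen
  simp only [Function.comp_apply, herr] at hsen
  refine hsen.trans ?_
  gcongr
  linarith [Real.sqrt_le_one.mpr hσtr]
end

section
/- (Naimark extension theorem) Let X be a finite nonempty index set with a distinguished element 0, and let {Γ_x}_{x∈X} be a POVM on ℂ^d, i.e., each Γ_x is positive semidefinite and Σ_{x∈X} Γ_x = I. Then there exists a unitary matrix U on ℂ^d ⊗ ℂ^X such that for every x ∈ X and every d×d complex matrix ρ, Tr{ U† (I_d ⊗ |x⟩⟨x|) U (ρ ⊗ |0⟩⟨0|) } = Tr{Γ_x ρ}, where {|x⟩}_{x∈X} is the standard orthonormal basis of ℂ^X. -/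
open Matrix Kronecker ComplexOrder

/-!
Write each effect as `Γ x = (B x)ᴴ * B x` and stack the blocks `B x` into the column
`V = ∑ₓ B x ⊗ |x⟩ : ℂ^d → ℂ^d ⊗ ℂ^X`. Since `∑ₓ Γ x = 1`, `V` is an isometry, so its columns are
orthonormal and can be completed to an orthonormal basis; the resulting unitary `U` satisfies
`U (v ⊗ |x₀⟩) = V v`. Preparing the probe in `|x₀⟩` compresses `U† (1 ⊗ |x⟩⟨x|) U` to
`V† (1 ⊗ |x⟩⟨x|) V = (B x)ᴴ * B x = Γ x`.
-/

namespace Matrix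

section Unitary

variable {𝕜 m n : Type*} [RCLike 𝕜] [Fintype m] [DecidableEq n]

theorem orthonormal_cols_of_conjTranspose_mul_self {A : Matrix m n 𝕜} (hA : Aᴴ * A = 1) :
    Orthonormal 𝕜 fun j => WithLp.toLp 2 (Aᵀ j) := by
  rw [orthonormal_iff_ite]
  intro j k
  rw [← one_apply, ← hA, mul_apply, PiLp.inner_apply]
  simp [mul_comm]

theorem exists_mem_unitaryGroup_submatrix_eq [DecidableEq m] {A : Matrix m n 𝕜}
    (hA : Aᴴ * A = 1) {f : n → m} (hf : Function.Injective f) :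
    ∃ U ∈ unitaryGroup m 𝕜, U.submatrix id f = A := by
  let cols : n → EuclideanSpace 𝕜 m := fun j => WithLp.toLp 2 (Aᵀ j)
  let v := Function.extend f cols 0
  have hv : Orthonormal 𝕜 ((Set.range f).domRestrict v) := by
    have : (Set.range f).domRestrict v = cols ∘ (Equiv.ofInjective f hf).symm := by
      ext ⟨_, j, rfl⟩ : 1
      simp [v, hf.extend_apply, Equiv.ofInjective_symm_apply]
    rw [this]
    exact (orthonormal_cols_of_conjTranspose_mul_self hA).comp _ (Equiv.injective _)
  obtain ⟨b, hb⟩ := hv.exists_orthonormalBasis_extension_of_card_eq finrank_euclideanSpace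
  refine ⟨(EuclideanSpace.basisFun m 𝕜).toBasis.toMatrix b,
    (EuclideanSpace.basisFun m 𝕜).toMatrix_orthonormalBasis_mem_unitary b, ?_⟩
  ext i j
  simp [Module.Basis.toMatrix_apply, hb (f j) ⟨j, rfl⟩, v, hf.extend_apply, cols]

end Unitary

open scoped MatrixOrder in
theorem PosSemidef.exists_eq_conjTranspose_mul_self {𝕜 n : Type*} [RCLike 𝕜] [Fintype n]
    [DecidableEq n] {A : Matrix n n 𝕜} (hA : A.PosSemidef) : ∃ B : Matrix n n 𝕜, A = Bᴴ * B :=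
  CStarAlgebra.nonneg_iff_eq_star_mul_self.mp hA.nonneg

theorem submatrix_conjTranspose_mul_mul {α m n : Type*} [Fintype m] [NonUnitalNonAssocSemiring α] [Star α]
    (U K : Matrix m m α) (f : n → m) :
    (Uᴴ * K * U).submatrix f f = (U.submatrix id f)ᴴ * K * U.submatrix id f := by
  rw [submatrix_mul _ _ _ id _ Function.bijective_id,
    submatrix_mul _ _ _ id _ Function.bijective_id, conjTranspose_submatrix, submatrix_id_id]

section Kronecker

variable {α n n' X : Type*} [NonAssocSemiring α] [Fintype n] [Fintype X]

def blockColumn (B : X → Matrix n n' α) : Matrix (n × X) n' α :=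
  of fun p j => B p.2 p.1 j

theorem conjTranspose_blockColumn_mul_self [Star α] (B : X → Matrix n n' α) :
    (blockColumn B)ᴴ * blockColumn B = ∑ x, (B x)ᴴ * B x := by
  ext j k
  simp [blockColumn, mul_apply, Fintype.sum_prod_type_right, sum_apply]

theorem conjTranspose_blockColumn_mul_kronecker_single_mul [Star α] [DecidableEq n]
    [DecidableEq X] (B : X → Matrix n n' α) (x : X) :
    (blockColumn B)ᴴ * ((1 : Matrix n n α) ⊗ₖ single x x 1) * blockColumn B = (B x)ᴴ * B x := by
  ext j k
  simp [blockColumn, mul_apply, Fintype.sum_prod_type, one_apply, single_apply, ite_and]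

theorem trace_mul_kronecker_single [DecidableEq X] (M : Matrix (n × X) (n × X) α)
    (ρ : Matrix n n α) (x₀ : X) :
    (M * (ρ ⊗ₖ single x₀ x₀ 1)).trace = (M.submatrix (·, x₀) (·, x₀) * ρ).trace := by
  simp [trace, mul_apply, Fintype.sum_prod_type, single_apply, ite_and]

end Kronecker

end Matrix

theorem naimark_extension_general {d : ℕ} {X : Type} [Fintype X] [DecidableEq X]
    (x₀ : X) (Γ : X → Matrix (Fin d) (Fin d) ℂ)
    (hΓ : ∀ x, (Γ x).PosSemidef) (hΓsum : ∑ x, Γ x = 1) :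
    ∃ U : Matrix (Fin d × X) (Fin d × X) ℂ,
      Uᴴ * U = 1 ∧ U * Uᴴ = 1 ∧
      ∀ (x : X) (ρ : Matrix (Fin d) (Fin d) ℂ),
        (Uᴴ * ((1 : Matrix (Fin d) (Fin d) ℂ) ⊗ₖ Matrix.single x x (1 : ℂ)) * U *
            (ρ ⊗ₖ Matrix.single x₀ x₀ (1 : ℂ))).trace
          = (Γ x * ρ).trace := by
  choose B hB using fun x => (hΓ x).exists_eq_conjTranspose_mul_self
  have hV : (blockColumn B)ᴴ * blockColumn B = 1 := by
    simp only [conjTranspose_blockColumn_mul_self, ← hB, hΓsum]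
  obtain ⟨U, hU, hUV⟩ := exists_mem_unitaryGroup_submatrix_eq hV (Prod.mk_left_injective x₀)
  refine ⟨U, mem_unitaryGroup_iff'.mp hU, mem_unitaryGroup_iff.mp hU, fun x ρ => ?_⟩
  rw [trace_mul_kronecker_single, submatrix_conjTranspose_mul_mul, hUV,
    conjTranspose_blockColumn_mul_kronecker_single_mul, hB]

/-- **Naimark extension theorem.**
For any POVM `{Γ_x}_{x ∈ X}` on `ℂ^d` (positive semidefinite matrices summing to the
identity), there is a unitary `U` on `ℂ^d ⊗ ℂ^X` such that measuring the probe in the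
standard basis after applying `U` to `ρ ⊗ |0⟩⟨0|` reproduces the POVM statistics:
`Tr (U† (I ⊗ |x⟩⟨x|) U (ρ ⊗ |0⟩⟨0|)) = Tr (Γ_x ρ)`. -/
theorem naimark_extension {d : ℕ} {X : Type} [Fintype X] [DecidableEq X] [Nonempty X]
    (x₀ : X) (Γ : X → Matrix (Fin d) (Fin d) ℂ)
    (hΓ : ∀ x, (Γ x).PosSemidef) (hΓsum : ∑ x, Γ x = 1) :
    ∃ U : Matrix (Fin d × X) (Fin d × X) ℂ,
      Uᴴ * U = 1 ∧ U * Uᴴ = 1 ∧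
      ∀ (x : X) (ρ : Matrix (Fin d) (Fin d) ℂ),
        (Uᴴ * ((1 : Matrix (Fin d) (Fin d) ℂ) ⊗ₖ Matrix.single x x (1 : ℂ)) * U *
            (ρ ⊗ₖ Matrix.single x₀ x₀ (1 : ℂ))).trace
          = (Γ x * ρ).trace :=
  naimark_extension_general x₀ Γ hΓ hΓsum
end

section
/- (Gentle Operator Lemma) Let ρ be a d×d positive semidefinite complex matrix with Tr ρ = 1 (a quantum state), and let Λ be a d×d complex matrix with 0 ≤ Λ ≤ I. Then ‖ρ − √Λ ρ √Λ‖₁ ≤ 2·√( Tr{(I − Λ) ρ} ), where ‖A‖₁ denotes the trace norm. In particular, if Tr{Λ ρ} ≥ 1 − ε for some ε ≥ 0, then ‖ρ − √Λ ρ √Λ‖₁ ≤ 2√ε. -/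
/-!
Write `S = √Λ` and `T = 1 - S`, so that `ρ - SρS = Tρ + SρT`. The trace norm of this Hermitian
matrix is `Re Tr (W (ρ - SρS))` for the unitary `W = sign (ρ - SρS)`. Cauchy–Schwarz for the
inner product `⟪X, Y⟫ = Tr (Y ρ Xᴴ)` bounds the two resulting terms by `√(Tr ρ) · √(Tr (TρT))`
and `√(Tr (SρS)) · √(Tr (TρT))`. Finally `Tr (SρS) = Tr (Λρ) ≤ Tr ρ`, and
`Tr (TρT) ≤ Tr ((1 - Λ) ρ)` because `T² ≤ 1 - Λ`, which amounts to `Λ ≤ √Λ` for `0 ≤ Λ ≤ 1`.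
-/

open Matrix ComplexOrder

/-- The positive semidefinite square root, as defined in Mathlib (Dec 2024), where it has since been removed. -/
noncomputable def Matrix.PosSemidef.sqrt {n : Type*} [Fintype n] [DecidableEq n] {𝕜 : Type*} [RCLike 𝕜]
    {A : Matrix n n 𝕜} (hA : A.PosSemidef) : Matrix n n 𝕜 :=
  hA.1.eigenvectorUnitary.1 * diagonal ((↑) ∘ (√·) ∘ hA.1.eigenvalues) *
    (star hA.1.eigenvectorUnitary : Matrix n n 𝕜)

/-- The trace norm `‖A‖₁ = Tr √(A† A)` of a complex matrix. -/
noncomputable def traceNorm {n : Type*} [Fintype n] [DecidableEq n]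
    (A : Matrix n n ℂ) : ℝ :=
  (Matrix.posSemidef_conjTranspose_mul_self A).sqrt.trace.re

open scoped MatrixOrder

variable {n : Type*} [Fintype n]

namespace Matrix.PosSemidef

variable {𝕜 : Type*} [RCLike 𝕜]

theorem re_trace_mul_mul_le {ρ : Matrix n n 𝕜} (hρ : ρ.PosSemidef) (A B : Matrix n n 𝕜) :
    RCLike.re (A * ρ * B).trace ≤
      √(RCLike.re (A * ρ * Aᴴ).trace) * √(RCLike.re (Bᴴ * ρ * B).trace) := by
  let := ρ.toMatrixSeminormedAddCommGroup hρ
  let := ρ.toMatrixInnerProductSpace hρ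
  have hinner (X Y : Matrix n n 𝕜) : inner 𝕜 X Y = (Y * ρ * Xᴴ).trace := rfl
  have hnorm (X : Matrix n n 𝕜) : ‖X‖ = √(RCLike.re (X * ρ * Xᴴ).trace) := by
    rw [norm_eq_sqrt_re_inner (𝕜 := 𝕜), hinner]
  have h := re_inner_le_norm (𝕜 := 𝕜) Bᴴ A
  rwa [hinner, hnorm, hnorm, conjTranspose_conjTranspose, mul_comm] at h

variable [DecidableEq n]

theorem re_trace_mul_le_re_trace_mul {ρ A B : Matrix n n 𝕜} (hρ : ρ.PosSemidef)
    (hAB : A ≤ B) : RCLike.re (A * ρ).trace ≤ RCLike.re (B * ρ).trace := by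
  obtain ⟨D, hD⟩ := CStarAlgebra.nonneg_iff_eq_star_mul_self.mp (sub_nonneg.mpr hAB)
  have hnonneg : 0 ≤ ((B - A) * ρ).trace := by
    rw [hD, mul_assoc, trace_mul_comm, star_eq_conjTranspose]
    exact (hρ.mul_mul_conjTranspose_same D).trace_nonneg
  have hre := (RCLike.nonneg_iff.mp hnonneg).1
  rw [sub_mul, trace_sub, map_sub] at hre
  linarith

theorem sqrt_eq_cfcSqrt {A : Matrix n n 𝕜} (hA : A.PosSemidef) : hA.sqrt = CFC.sqrt A := by
  rw [CFC.sqrt_eq_real_sqrt A hA.nonneg, cfcₙ_eq_cfc, hA.1.cfc_eq]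
  rfl

end Matrix.PosSemidef

variable [DecidableEq n]

theorem Matrix.le_cfcSqrt_of_le_one {𝕜 : Type*} [RCLike 𝕜] {Λ : Matrix n n 𝕜} (h0 : 0 ≤ Λ)
    (h1 : Λ ≤ 1) : Λ ≤ CFC.sqrt Λ := by
  rw [CFC.sqrt_eq_real_sqrt Λ, cfcₙ_eq_cfc]
  nth_rw 1 [← cfc_id ℝ Λ]
  exact (cfc_le_iff id Real.sqrt Λ).mpr fun x hx =>
    Real.le_sqrt_self_iff.mpr ((CFC.le_one_iff Λ).mp h1 x hx)

theorem Matrix.one_sub_cfcSqrt_mul_self_le {𝕜 : Type*} [RCLike 𝕜] {Λ : Matrix n n 𝕜}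
    (h0 : 0 ≤ Λ) (h1 : Λ ≤ 1) : (1 - CFC.sqrt Λ) * (1 - CFC.sqrt Λ) ≤ 1 - Λ := by
  have hΛ := le_cfcSqrt_of_le_one h0 h1
  set S := CFC.sqrt Λ
  have hsq : (1 - Λ) - (1 - S) * (1 - S) = (S - Λ) + (S - Λ) := by
    rw [← CFC.sqrt_mul_sqrt_self Λ]
    noncomm_ring
  rw [← sub_nonneg, hsq]
  exact add_nonneg (sub_nonneg.mpr hΛ) (sub_nonneg.mpr hΛ)

theorem traceNorm_eq_re_trace_cfcAbs (A : Matrix n n ℂ) :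
    traceNorm A = (CFC.abs A).trace.re := by
  rw [traceNorm, PosSemidef.sqrt_eq_cfcSqrt, CFC.abs, star_eq_conjTranspose]

theorem Matrix.IsHermitian.exists_mem_unitary_mul_eq_cfcAbs {H : Matrix n n ℂ}
    (hH : H.IsHermitian) : ∃ W ∈ unitary (Matrix n n ℂ), W * H = CFC.abs H := by
  set sign : ℝ → ℝ := fun x => if x < 0 then -1 else 1
  have hsign : ContinuousOn sign (spectrum ℝ H) := H.finite_real_spectrum.continuousOn _
  refine ⟨cfc sign H, (cfc_unitary_iff sign H hH.isSelfAdjoint hsign).mpr fun x _ => ?_, ?_⟩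
  · by_cases hx : x < 0 <;> simp [sign, hx]
  · nth_rw 2 [← cfc_id' ℝ H]
    rw [← cfc_mul sign _ _ hsign, CFC.abs_eq_cfc_norm H hH.isSelfAdjoint]
    refine cfc_congr fun x _ => ?_
    by_cases hx : x < 0
    · simp [sign, hx, abs_of_neg hx]
    · simp [sign, hx, abs_of_nonneg (not_lt.mp hx)]

namespace Matrix.PosSemidef

theorem re_trace_mul_sub_mul_mul_le {ρ S W : Matrix n n ℂ} (hρ : ρ.PosSemidef)
    (hS : Sᴴ = S) (hW : W ∈ unitary (Matrix n n ℂ)) :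
    (W * (ρ - S * ρ * S)).trace.re ≤
      (√ρ.trace.re + √(S * ρ * S).trace.re) * √((1 - S) * ρ * (1 - S)).trace.re := by
  have hT : (1 - S)ᴴ = 1 - S := by rw [conjTranspose_sub, conjTranspose_one, hS]
  have hsplit : (W * (ρ - S * ρ * S)).trace
      = ((1 - S) * ρ * W).trace + (W * S * ρ * (1 - S)).trace := by
    rw [← trace_mul_comm W, ← trace_add]
    congr 1
    noncomm_ring
  have h1 := hρ.re_trace_mul_mul_le (1 - S) W
  have h2 := hρ.re_trace_mul_mul_le (W * S) (1 - S)
  have hWρW : (Wᴴ * ρ * W).trace = ρ.trace := by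
    rw [trace_mul_cycle, ← star_eq_conjTranspose, Unitary.mul_star_self_of_mem hW, one_mul]
  have hWSρSW : (W * S * ρ * (W * S)ᴴ).trace = (S * ρ * S).trace := by
    rw [conjTranspose_mul, hS, ← star_eq_conjTranspose,
      show W * S * ρ * (S * star W) = W * (S * ρ * S) * star W by noncomm_ring,
      trace_mul_cycle, Unitary.star_mul_self_of_mem hW, one_mul]
  simp only [RCLike.re_to_complex] at h1 h2
  rw [hT, hWρW] at h1
  rw [hT, hWSρSW] at h2
  rw [hsplit, Complex.add_re, add_mul]
  linarith

theorem traceNorm_sub_cfcSqrt_mul_mul_cfcSqrt_le {ρ Λ : Matrix n n ℂ}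
    (hρ : ρ.PosSemidef) (h0 : 0 ≤ Λ) (h1 : Λ ≤ 1) :
    traceNorm (ρ - CFC.sqrt Λ * ρ * CFC.sqrt Λ) ≤
      2 * √ρ.trace.re * √((1 - Λ) * ρ).trace.re := by
  set S := CFC.sqrt Λ
  have hS : Sᴴ = S := (CFC.sqrt_nonneg Λ).isSelfAdjoint
  have hSS : S * S = Λ := CFC.sqrt_mul_sqrt_self Λ
  have hΔ : (ρ - S * ρ * S).IsHermitian := by
    refine hρ.isHermitian.sub ?_
    rw [IsHermitian, conjTranspose_mul, conjTranspose_mul, hS, hρ.isHermitian.eq, mul_assoc]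
  obtain ⟨W, hW, hWΔ⟩ := hΔ.exists_mem_unitary_mul_eq_cfcAbs
  have hSρS : (S * ρ * S).trace.re ≤ ρ.trace.re := by
    rw [trace_mul_cycle, hSS]
    simpa using hρ.re_trace_mul_le_re_trace_mul h1
  have hTρT : ((1 - S) * ρ * (1 - S)).trace.re ≤ ((1 - Λ) * ρ).trace.re := by
    rw [trace_mul_cycle]
    simpa using hρ.re_trace_mul_le_re_trace_mul (one_sub_cfcSqrt_mul_self_le h0 h1)
  calc traceNorm (ρ - S * ρ * S)
      = (W * (ρ - S * ρ * S)).trace.re := by rw [traceNorm_eq_re_trace_cfcAbs, hWΔ]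
    _ ≤ (√ρ.trace.re + √(S * ρ * S).trace.re) * √((1 - S) * ρ * (1 - S)).trace.re :=
        hρ.re_trace_mul_sub_mul_mul_le hS hW
    _ ≤ (√ρ.trace.re + √ρ.trace.re) * √((1 - Λ) * ρ).trace.re := by
        gcongr
    _ = 2 * √ρ.trace.re * √((1 - Λ) * ρ).trace.re := by ring

end Matrix.PosSemidef

/-- **Gentle Operator Lemma.**
For a quantum state `ρ` and `0 ≤ Λ ≤ I`,
`‖ρ − √Λ ρ √Λ‖₁ ≤ 2 √(Tr ((I − Λ) ρ))`; in particular, if `Tr (Λ ρ) ≥ 1 − ε` with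
`ε ≥ 0`, then `‖ρ − √Λ ρ √Λ‖₁ ≤ 2 √ε`. -/
theorem gentle_operator {d : ℕ} (ρ Λ : Matrix (Fin d) (Fin d) ℂ)
    (hρ : ρ.PosSemidef) (hρtr : ρ.trace = 1)
    (hΛ : Λ.PosSemidef) (hΛI : ((1 : Matrix (Fin d) (Fin d) ℂ) - Λ).PosSemidef) :
    traceNorm (ρ - hΛ.sqrt * ρ * hΛ.sqrt)
        ≤ 2 * Real.sqrt ((((1 : Matrix (Fin d) (Fin d) ℂ) - Λ) * ρ).trace.re) ∧
    ∀ ε : ℝ, 0 ≤ ε → 1 - ε ≤ (Λ * ρ).trace.re →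
      traceNorm (ρ - hΛ.sqrt * ρ * hΛ.sqrt) ≤ 2 * Real.sqrt ε := by
  have hgentle : traceNorm (ρ - hΛ.sqrt * ρ * hΛ.sqrt) ≤ 2 * √((1 - Λ) * ρ).trace.re := by
    simpa [hΛ.sqrt_eq_cfcSqrt, hρtr] using
      hρ.traceNorm_sub_cfcSqrt_mul_mul_cfcSqrt_le hΛ.nonneg (le_iff.mpr hΛI)
  refine ⟨hgentle, fun ε _ hε => hgentle.trans ?_⟩
  have htrace : ((1 - Λ) * ρ).trace.re = 1 - (Λ * ρ).trace.re := by
    simp [sub_mul, hρtr]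
  gcongr
  linarith
end

section
/- Let ρ₁, …, ρ_M and more generally ρ_x (x in a finite set X) be quantum states on ℂ^d, let A₁, …, A_M be d×d matrices with 0 ≤ A_j ≤ I, and fix m ∈ {1,…,M}. Let Π₁, …, Π_M be orthogonal projections on ℂ^d ⊗ (ℂ²)^{⊗M} satisfying Tr{Π_j (τ ⊗ |0̄⟩⟨0̄|)} = Tr{A_j τ} for every d×d matrix τ (Naimark extensions of the A_j). Then the error probability of the sequential decoder on input ρ_m, namely 1 − Tr{ Π_m (I − Π_{m−1}) ⋯ (I − Π₁) (ρ_m ⊗ |0̄⟩⟨0̄|) (I − Π₁) ⋯ (I − Π_{m−1}) Π_m }, is at most 2·√( 1 − Tr{A_m ρ_m} + Σ_{j ≠ m} Tr{A_j ρ_m} ). -/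
/-!
For a vector `v` and orthogonal projections `Q₁, …, Q_k` with `Π = Q_k ⋯ Q₁`, the difference
`v - Π v` telescopes into the pieces `(1 - Q_i) Q_{i-1} ⋯ Q₁ v`. As `1 - Q_i` is an orthogonal
projection, `⟪v, (1 - Q_i) u⟫ = ⟪(1 - Q_i) v, (1 - Q_i) u⟫`, and by Pythagoras the squared norms
of the pieces add up to `‖v‖² - ‖Π v‖²`; Cauchy–Schwarz therefore gives
`Re ⟪v, v - Π v⟫ ≤ √(∑ ‖(1 - Q_i) v‖²) · √(‖v‖² - ‖Π v‖²)`. Together with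
`‖v‖² - ‖Π v‖² ≤ 2 Re ⟪v, v - Π v⟫` (which is `‖v - Π v‖² ≥ 0`) this is the non-commutative
union bound `‖v‖² - ‖Π v‖² ≤ 2 ‖v‖ √(∑ ‖(1 - Q_i) v‖²)`. A density matrix is a sum `∑ vᵢ vᵢ*`,
and the bound passes to it by one more Cauchy–Schwarz. For the decoder, the Naimark property
turns `Tr ((1 - Π_m) (ρ_m ⊗ |0̄⟩⟨0̄|))` into `1 - Tr (A_m ρ_m)` and `Tr (Π_j (ρ_m ⊗ |0̄⟩⟨0̄|))`
into `Tr (A_j ρ_m) ≥ 0`, and the terms with `j > m` only enlarge the bound.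
-/

open Matrix Kronecker ComplexOrder

open scoped InnerProductSpace

theorem Real.sqrt_mul_sqrt_add_sqrt_mul_sqrt_le {a b c d : ℝ} (ha : 0 ≤ a) (hb : 0 ≤ b)
    (hc : 0 ≤ c) (hd : 0 ≤ d) : √a * √b + √c * √d ≤ √(a + c) * √(b + d) := by
  simpa [Fin.sum_univ_two, Fin.forall_fin_two, ha, hb, hc, hd] using
    Real.sum_sqrt_mul_sqrt_le Finset.univ (f := ![a, c]) (g := ![b, d])
      (by simp [Fin.forall_fin_two, ha, hc]) (by simp [Fin.forall_fin_two, hb, hd])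

namespace LinearMap.IsSymmetricProjection

variable {𝕜 E : Type*} [RCLike 𝕜] [SeminormedAddCommGroup E] [InnerProductSpace 𝕜 E]
  {Q : E →ₗ[𝕜] E}

theorem inner_apply_right_eq (hQ : Q.IsSymmetricProjection) (v w : E) :
    ⟪v, Q w⟫_𝕜 = ⟪Q v, Q w⟫_𝕜 := by
  rw [hQ.isSymmetric, ← Module.End.mul_apply, hQ.isIdempotentElem.eq]

theorem inner_sub_apply_right_eq (hQ : Q.IsSymmetricProjection) (v w : E) :
    ⟪v, w - Q w⟫_𝕜 = ⟪v - Q v, w - Q w⟫_𝕜 := by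
  rw [inner_sub_left, inner_sub_right, inner_sub_right, ← hQ.inner_apply_right_eq,
    hQ.isSymmetric]
  ring

theorem norm_apply_sq_add_norm_sub_apply_sq (hQ : Q.IsSymmetricProjection) (v : E) :
    ‖Q v‖ ^ 2 + ‖v - Q v‖ ^ 2 = ‖v‖ ^ 2 := by
  have horth : ⟪Q v, v - Q v⟫_𝕜 = 0 := by
    rw [inner_sub_right, ← hQ.inner_apply_right_eq, hQ.isSymmetric, sub_self]
  have h := norm_add_sq_eq_norm_sq_add_norm_sq_of_inner_eq_zero _ _ horth
  rw [add_sub_cancel] at h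
  rw [sq, sq, sq, h]

variable {Qs : List (E →ₗ[𝕜] E)}

theorem norm_list_prod_apply_le (hQs : ∀ Q ∈ Qs, Q.IsSymmetricProjection) (v : E) :
    ‖Qs.prod v‖ ≤ ‖v‖ := by
  induction Qs with
  | nil => simp
  | cons Q Qs ih =>
    have hQ := (hQs Q List.mem_cons_self).norm_apply_sq_add_norm_sub_apply_sq (Qs.prod v)
    have h := ih fun R hR => hQs R (List.mem_cons_of_mem Q hR)
    rw [List.prod_cons, Module.End.mul_apply]
    nlinarith [norm_nonneg (Q (Qs.prod v)), norm_nonneg (Qs.prod v), norm_nonneg v,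
      sq_nonneg ‖Qs.prod v - Q (Qs.prod v)‖]

theorem re_inner_sub_list_prod_apply_le (hQs : ∀ Q ∈ Qs, Q.IsSymmetricProjection) (v : E) :
    RCLike.re ⟪v, v - Qs.prod v⟫_𝕜 ≤
      √(Qs.map fun Q => ‖v - Q v‖ ^ 2).sum * √(‖v‖ ^ 2 - ‖Qs.prod v‖ ^ 2) := by
  induction Qs with
  | nil => simp
  | cons Q Qs ih =>
    have hQ := hQs Q List.mem_cons_self
    have hQs' : ∀ R ∈ Qs, R.IsSymmetricProjection := fun R hR => hQs R (List.mem_cons_of_mem Q hR)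
    set w := Qs.prod v
    have hsplit : v - Q w = (v - w) + (w - Q w) := by abel
    have hnew : RCLike.re ⟪v, w - Q w⟫_𝕜 ≤ ‖v - Q v‖ * ‖w - Q w‖ := by
      rw [hQ.inner_sub_apply_right_eq]
      exact re_inner_le_norm _ _
    have hpyth := hQ.norm_apply_sq_add_norm_sub_apply_sq w
    have hw : ‖w‖ ≤ ‖v‖ := norm_list_prod_apply_le hQs' v
    have hsum : 0 ≤ (Qs.map fun R => ‖v - R v‖ ^ 2).sum :=
      List.sum_nonneg (by simp only [List.mem_map]; rintro _ ⟨R, -, rfl⟩; positivity)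
    have hcs := Real.sqrt_mul_sqrt_add_sqrt_mul_sqrt_le hsum
      (sub_nonneg.2 (pow_le_pow_left₀ (norm_nonneg _) hw 2))
      (sq_nonneg ‖v - Q v‖) (sq_nonneg ‖w - Q w‖)
    rw [Real.sqrt_sq (norm_nonneg _), Real.sqrt_sq (norm_nonneg _)] at hcs
    rw [List.prod_cons, Module.End.mul_apply, hsplit, inner_add_right, map_add, List.map_cons,
      List.sum_cons, add_comm (‖v - Q v‖ ^ 2)]
    calc _ ≤ _ := add_le_add (ih hQs') hnew
      _ ≤ _ := hcs
      _ = _ := by congr 2; linarith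

theorem norm_sq_sub_norm_list_prod_apply_sq_le (hQs : ∀ Q ∈ Qs, Q.IsSymmetricProjection) (v : E) :
    ‖v‖ ^ 2 - ‖Qs.prod v‖ ^ 2 ≤ 2 * ‖v‖ * √(Qs.map fun Q => ‖v - Q v‖ ^ 2).sum := by
  set w := Qs.prod v
  have hw : ‖w‖ ≤ ‖v‖ := norm_list_prod_apply_le hQs v
  have hdefect : ‖v‖ ^ 2 - ‖w‖ ^ 2 ≤ 2 * RCLike.re ⟪v, v - w⟫_𝕜 := by
    have := norm_sub_sq (𝕜 := 𝕜) v w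
    rw [inner_sub_right, map_sub, inner_self_eq_norm_sq]
    nlinarith [sq_nonneg ‖v - w‖]
  have hroot : √(‖v‖ ^ 2 - ‖w‖ ^ 2) ≤ ‖v‖ :=
    (Real.sqrt_le_left (norm_nonneg v)).2 (sub_le_self _ (sq_nonneg _))
  calc ‖v‖ ^ 2 - ‖w‖ ^ 2 ≤ 2 * RCLike.re ⟪v, v - w⟫_𝕜 := hdefect
    _ ≤ 2 * (√(Qs.map fun Q => ‖v - Q v‖ ^ 2).sum * √(‖v‖ ^ 2 - ‖w‖ ^ 2)) := by
      gcongr; exact re_inner_sub_list_prod_apply_le hQs v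
    _ ≤ 2 * (√(Qs.map fun Q => ‖v - Q v‖ ^ 2).sum * ‖v‖) := by gcongr
    _ = _ := by ring

theorem sum_norm_sq_sub_norm_list_prod_apply_sq_le (hQs : ∀ Q ∈ Qs, Q.IsSymmetricProjection)
    {ι : Type*} (s : Finset ι) (v : ι → E) :
    ∑ i ∈ s, (‖v i‖ ^ 2 - ‖Qs.prod (v i)‖ ^ 2) ≤
      2 * √(∑ i ∈ s, ‖v i‖ ^ 2) * √(Qs.map fun Q => ∑ i ∈ s, ‖v i - Q (v i)‖ ^ 2).sum := by
  have hswap : ∑ i ∈ s, (Qs.map fun Q => ‖v i - Q (v i)‖ ^ 2).sum =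
      (Qs.map fun Q => ∑ i ∈ s, ‖v i - Q (v i)‖ ^ 2).sum := by
    simpa using (Multiset.sum_map_sum (m := (Qs : Multiset (E →ₗ[𝕜] E))) (s := s)
      (f := fun Q i => ‖v i - Q (v i)‖ ^ 2)).symm
  have hS : ∀ i, 0 ≤ (Qs.map fun Q => ‖v i - Q (v i)‖ ^ 2).sum := fun i =>
    List.sum_nonneg (by simp only [List.mem_map]; rintro _ ⟨R, -, rfl⟩; positivity)
  calc _ ≤ ∑ i ∈ s, 2 * ‖v i‖ * √(Qs.map fun Q => ‖v i - Q (v i)‖ ^ 2).sum :=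
        Finset.sum_le_sum fun i _ => norm_sq_sub_norm_list_prod_apply_sq_le hQs (v i)
    _ = 2 * ∑ i ∈ s, ‖v i‖ * √(Qs.map fun Q => ‖v i - Q (v i)‖ ^ 2).sum := by
        rw [Finset.mul_sum]; simp only [mul_assoc]
    _ ≤ 2 * (√(∑ i ∈ s, ‖v i‖ ^ 2) *
          √(∑ i ∈ s, √(Qs.map fun Q => ‖v i - Q (v i)‖ ^ 2).sum ^ 2)) := by
        gcongr; exact Real.sum_mul_le_sqrt_mul_sqrt s _ _
    _ = _ := by simp only [Real.sq_sqrt (hS _), hswap]; ring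

end LinearMap.IsSymmetricProjection

section

variable {𝕜 ι κ : Type*} [RCLike 𝕜] [Fintype ι] [Fintype κ]

theorem Matrix.trace_mul_vecMulVec_star_mul_conjTranspose (X : Matrix κ ι 𝕜) (v : ι → 𝕜) :
    (X * vecMulVec v (star v) * Xᴴ).trace = ((‖WithLp.toLp 2 (X *ᵥ v)‖ ^ 2 : ℝ) : 𝕜) := by
  rw [mul_vecMulVec, vecMulVec_mul, ← star_mulVec, trace_vecMulVec,
    ← EuclideanSpace.inner_eq_star_dotProduct]
  exact_mod_cast inner_self_eq_norm_sq_to_K (𝕜 := 𝕜) (WithLp.toLp 2 (X *ᵥ v) : EuclideanSpace 𝕜 κ)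

theorem IsStarProjection.trace_mul_mul_conjTranspose {Q : Matrix ι ι 𝕜} (hQ : IsStarProjection Q)
    (ρ : Matrix ι ι 𝕜) :
    (Q * ρ * Qᴴ).trace = (Q * ρ).trace := by
  rw [trace_mul_cycle, show Qᴴ = Q from hQ.isSelfAdjoint, hQ.isIdempotentElem.eq]

theorem IsStarProjection.re_trace_mul_nonneg {Q ρ : Matrix ι ι 𝕜} (hQ : IsStarProjection Q)
    (hρ : ρ.PosSemidef) : 0 ≤ RCLike.re (Q * ρ).trace := by
  rw [← hQ.trace_mul_mul_conjTranspose]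
  exact (RCLike.nonneg_iff.mp (hρ.mul_mul_conjTranspose_same Q).trace_nonneg).1

theorem IsStarProjection.posSemidef {Q : Matrix ι ι 𝕜} (hQ : IsStarProjection Q) :
    Q.PosSemidef := by
  simpa [show Qᴴ = Q from hQ.isSelfAdjoint, hQ.isIdempotentElem.eq] using
    posSemidef_conjTranspose_mul_self Q

variable [DecidableEq ι]

theorem Matrix.conjTranspose_list_prod_of_isSelfAdjoint {L : List (Matrix ι ι 𝕜)}
    (hL : ∀ Q ∈ L, IsSelfAdjoint Q) : L.prodᴴ = L.reverse.prod := by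
  rw [conjTranspose_list_prod, List.map_congr_left (f := conjTranspose) hL, List.map_id']

theorem Matrix.PosSemidef.re_trace_sub_le_of_isStarProjection {ρ : Matrix ι ι 𝕜}
    (hρ : ρ.PosSemidef) {Qs : List (Matrix ι ι 𝕜)} (hQs : ∀ Q ∈ Qs, IsStarProjection Q) :
    RCLike.re ρ.trace - RCLike.re (Qs.prod * ρ * (Qs.prod)ᴴ).trace ≤
      2 * √(RCLike.re ρ.trace) * √(Qs.map fun Q => RCLike.re ((1 - Q) * ρ).trace).sum := by
  obtain ⟨r, v, hv⟩ := posSemidef_iff_eq_sum_vecMulVec.mp hρ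
  have hre (X : Matrix ι ι 𝕜) :
      RCLike.re (X * ρ * Xᴴ).trace = ∑ i, ‖WithLp.toLp 2 (X *ᵥ v i)‖ ^ 2 := by
    rw [hv, Matrix.mul_sum, Matrix.sum_mul, trace_sum, map_sum]
    simp only [trace_mul_vecMulVec_star_mul_conjTranspose, RCLike.ofReal_re]
  let T : Matrix ι ι 𝕜 →+* Module.End 𝕜 (EuclideanSpace 𝕜 ι) :=
    ContinuousLinearMap.toLinearMapRingHom.comp toEuclideanCLM.toRingHom
  have hTQs : ∀ Q ∈ Qs.map T, Q.IsSymmetricProjection := by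
    simp only [List.mem_map]
    rintro _ ⟨Q, hQ, rfl⟩
    exact ContinuousLinearMap.IsStarProjection.isSymmetricProjection
      ((hQs Q hQ).map (toEuclideanCLM (n := ι) (𝕜 := 𝕜)))
  have hprod (w : ι → 𝕜) : (Qs.map T).prod (WithLp.toLp 2 w) = WithLp.toLp 2 (Qs.prod *ᵥ w) := by
    rw [← map_list_prod]; rfl
  have herr : ((Qs.map T).map fun Q => ∑ i, ‖WithLp.toLp 2 (v i) - Q (WithLp.toLp 2 (v i))‖ ^ 2) =
      Qs.map fun Q => RCLike.re ((1 - Q) * ρ).trace := by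
    rw [List.map_map]
    refine List.map_congr_left fun Q hQ => ?_
    rw [Function.comp_apply, ← (hQs Q hQ).one_sub.trace_mul_mul_conjTranspose, hre]
    simp only [sub_mulVec, one_mulVec, WithLp.toLp_sub]
    rfl
  have htr : RCLike.re ρ.trace = ∑ i, ‖WithLp.toLp 2 (v i)‖ ^ 2 := by simpa using hre 1
  have key := LinearMap.IsSymmetricProjection.sum_norm_sq_sub_norm_list_prod_apply_sq_le hTQs
    Finset.univ fun i => WithLp.toLp 2 (v i)
  rw [herr, Finset.sum_sub_distrib] at key
  simpa only [htr, hre, hprod] using key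

end

theorem isStarProjection_probeZero {M : ℕ} : IsStarProjection (probeZero M) where
  isIdempotentElem := by rw [IsIdempotentElem, probeZero, single_mul_single_same, one_mul]
  isSelfAdjoint := by
    rw [IsSelfAdjoint, star_eq_conjTranspose, probeZero, conjTranspose_single, star_one]

theorem trace_probeZero (M : ℕ) : (probeZero M).trace = 1 :=
  trace_single_eq_same _ _

theorem Fin.sum_castLE_le_sum_erase {M : ℕ} {β : Type*} [AddCommMonoid β] [PartialOrder β]
    [IsOrderedAddMonoid β] (g : Fin M → β) (hg : ∀ j, 0 ≤ g j) (m : Fin M) :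
    ∑ j : Fin m, g (Fin.castLE m.isLt.le j) ≤ ∑ j ∈ Finset.univ.erase m, g j := by
  refine (Finset.sum_map Finset.univ (Fin.castLEEmb m.isLt.le) g).symm.trans_le
    (Finset.sum_le_sum_of_subset_of_nonneg ?_ fun j _ _ => hg j)
  rintro _ hj
  obtain ⟨j, -, rfl⟩ := Finset.mem_map.mp hj
  exact Finset.mem_erase.mpr ⟨Fin.ne_of_lt j.isLt, Finset.mem_univ _⟩

theorem sequential_decoder_error_bound_general {d M : ℕ}
    (ρ : Fin M → Matrix (Fin d) (Fin d) ℂ)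
    (hρ : ∀ j, (ρ j).PosSemidef) (hρtr : ∀ j, (ρ j).trace = 1)
    (A : Fin M → Matrix (Fin d) (Fin d) ℂ)
    (m : Fin M)
    (P : Fin M → Matrix (Fin d × (Fin M → Fin 2)) (Fin d × (Fin M → Fin 2)) ℂ)
    (hherm : ∀ j, (P j).IsHermitian) (hproj : ∀ j, P j * P j = P j)
    (hNaimark : ∀ j (τ : Matrix (Fin d) (Fin d) ℂ),
      (P j * (τ ⊗ₖ probeZero M)).trace = (A j * τ).trace) :
    1 - (P m *
          (List.ofFn fun j : Fin (m : ℕ) => 1 - P (Fin.castLE m.isLt.le j)).reverse.prod *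
          (ρ m ⊗ₖ probeZero M) *
          (List.ofFn fun j : Fin (m : ℕ) => 1 - P (Fin.castLE m.isLt.le j)).prod *
          P m).trace.re
      ≤ 2 * Real.sqrt (1 - (A m * ρ m).trace.re
          + ∑ j ∈ Finset.univ.erase m, (A j * ρ m).trace.re) := by
  set ρt := ρ m ⊗ₖ probeZero M
  set R := List.ofFn fun j : Fin (m : ℕ) => 1 - P (Fin.castLE m.isLt.le j)
  have hP (j : Fin M) : IsStarProjection (P j) := ⟨hproj j, hherm j⟩
  have hQs : ∀ Q ∈ P m :: R.reverse, IsStarProjection Q := by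
    simp only [R, List.mem_cons, List.mem_reverse, List.mem_ofFn]
    rintro _ (rfl | ⟨j, rfl⟩)
    exacts [hP m, (hP _).one_sub]
  have hρt : ρt.PosSemidef := (hρ m).kronecker isStarProjection_probeZero.posSemidef
  have htr : ρt.trace = 1 := by rw [trace_kronecker, hρtr, trace_probeZero, one_mul]
  have hacc (j : Fin M) : (P j * ρt).trace.re = (A j * ρ m).trace.re := by rw [hNaimark]
  have hsandwich : P m * R.reverse.prod * ρt * R.prod * P m =
      (P m :: R.reverse).prod * ρt * ((P m :: R.reverse).prod)ᴴ := by
    rw [conjTranspose_list_prod_of_isSelfAdjoint fun Q hQ => (hQs Q hQ).isSelfAdjoint,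
      List.reverse_cons, List.prod_append, List.reverse_reverse, List.prod_singleton]
    simp only [List.prod_cons, Matrix.mul_assoc]
  have herr : ((P m :: R.reverse).map fun Q => ((1 - Q) * ρt).trace.re).sum =
      1 - (A m * ρ m).trace.re + ∑ j : Fin m, (A (Fin.castLE m.isLt.le j) * ρ m).trace.re := by
    simp [R, List.sum_ofFn, Matrix.sub_mul, htr, hacc]
  have hbound := hρt.re_trace_sub_le_of_isStarProjection hQs
  simp only [RCLike.re_to_complex, herr, htr, Complex.one_re, Real.sqrt_one, mul_one] at hbound
  have hacc_nonneg (j : Fin M) : 0 ≤ (A j * ρ m).trace.re := by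
    simpa [← hacc] using (hP j).re_trace_mul_nonneg hρt
  rw [hsandwich]
  exact hbound.trans (by gcongr; exact Fin.sum_castLE_le_sum_erase _ hacc_nonneg m)

/-- **Error bound for the sequential decoder.**
Let `ρ₁, …, ρ_M` be states and `0 ≤ A_j ≤ I` test operators on `ℂ^d`, and let
`Π₁, …, Π_M` be orthogonal projections on `ℂ^d ⊗ (ℂ²)^{⊗M}` that are Naimark extensions
of the `A_j`.  Then the error probability of the sequential decoder on input `ρ_m`,
`1 − Tr (Π_m (I−Π_{m−1}) ⋯ (I−Π₁) (ρ_m ⊗ |0̄⟩⟨0̄|) (I−Π₁) ⋯ (I−Π_{m−1}) Π_m)`,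
is at most `2 √(1 − Tr (A_m ρ_m) + ∑_{j ≠ m} Tr (A_j ρ_m))`. -/
theorem sequential_decoder_error_bound {d M : ℕ}
    (ρ : Fin M → Matrix (Fin d) (Fin d) ℂ)
    (hρ : ∀ j, (ρ j).PosSemidef) (hρtr : ∀ j, (ρ j).trace = 1)
    (A : Fin M → Matrix (Fin d) (Fin d) ℂ)
    (hA : ∀ j, (A j).PosSemidef)
    (hAI : ∀ j, ((1 : Matrix (Fin d) (Fin d) ℂ) - A j).PosSemidef)
    (m : Fin M)
    (P : Fin M → Matrix (Fin d × (Fin M → Fin 2)) (Fin d × (Fin M → Fin 2)) ℂ)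
    (hherm : ∀ j, (P j).IsHermitian) (hproj : ∀ j, P j * P j = P j)
    (hNaimark : ∀ j (τ : Matrix (Fin d) (Fin d) ℂ),
      (P j * (τ ⊗ₖ probeZero M)).trace = (A j * τ).trace) :
    1 - (P m *
          (List.ofFn fun j : Fin (m : ℕ) => 1 - P (Fin.castLE m.isLt.le j)).reverse.prod *
          (ρ m ⊗ₖ probeZero M) *
          (List.ofFn fun j : Fin (m : ℕ) => 1 - P (Fin.castLE m.isLt.le j)).prod *
          P m).trace.re
      ≤ 2 * Real.sqrt (1 - (A m * ρ m).trace.re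
          + ∑ j ∈ Finset.univ.erase m, (A j * ρ m).trace.re) :=
  sequential_decoder_error_bound_general ρ hρ hρtr A m P hherm hproj hNaimark
end

section
/- Let X be a finite set, p a probability distribution on X, ρ_x quantum states on ℂ^d for x ∈ X, and Q a matrix on ℂ^X ⊗ ℂ^d with 0 ≤ Q ≤ I and Tr{Q ρ_{XB}} ≥ 1 − ε′, where ρ_{XB} = Σ_x p(x)|x⟩⟨x| ⊗ ρ_x. For each x define A_x = Tr_X{(|x⟩⟨x| ⊗ I_d) Q}. Then the expectation, over codebooks (x₁,…,x_M) drawn i.i.d. from p, of the quantity 2·√( 1 − Tr{A_{x_m} ρ_{x_m}} + Σ_{j ≠ m} Tr{A_{x_j} ρ_{x_m}} ) for any fixed message index m is at most 2·√( ε′ + M · Tr{Q (ρ_X ⊗ ρ_B)} ), where ρ_X = Σ_x p(x)|x⟩⟨x| and ρ_B = Σ_x p(x)ρ_x. -/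
open Matrix Kronecker ComplexOrder

/-- Partial trace over the first (classical) tensor factor:
`(traceLeft M) i j = ∑ₐ M (a, i) (a, j)`. -/
noncomputable def traceLeft {α β : Type*} [Fintype α]
    (M : Matrix (α × β) (α × β) ℂ) : Matrix β β ℂ :=
  Matrix.of fun i j => ∑ a, M (a, i) (a, j)

/-- The test operator `A_x = Tr_X ((|x⟩⟨x| ⊗ I) Q)` associated with the letter `x`. -/
noncomputable def testOp {d : ℕ} {X : Type} [Fintype X] [DecidableEq X]
    (Q : Matrix (X × Fin d) (X × Fin d) ℂ) (x : X) : Matrix (Fin d) (Fin d) ℂ :=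
  traceLeft ((Matrix.single x x (1 : ℂ) ⊗ₖ (1 : Matrix (Fin d) (Fin d) ℂ)) * Q)

/-! Jensen's inequality for the concave square root moves the expectation over codebooks inside
the root. Under the i.i.d. distribution the letter `c m` has law `p`, so the diagonal term averages
to `Tr (Q ρ_XB) ≥ 1 - ε'`, while for `j ≠ m` the pair `(c j, c m)` has law `p ⊗ p`, so each of the
`M - 1 ≤ M` cross terms averages to `Tr (Q (ρ_X ⊗ ρ_B))`. -/

namespace Matrix

variable {n : Type*} [Fintype n] {𝕜 : Type*} [RCLike 𝕜] {A B : Matrix n n 𝕜}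

lemma PosSemidef.trace_mul_nonneg (hA : A.PosSemidef) (hB : B.PosSemidef) :
    0 ≤ (A * B).trace := by
  classical
  open scoped MatrixOrder in
  obtain ⟨C, rfl⟩ := CStarAlgebra.nonneg_iff_eq_star_mul_self.mp hB.nonneg
  rw [star_eq_conjTranspose, ← Matrix.mul_assoc, trace_mul_cycle]
  exact (hA.mul_mul_conjTranspose_same C).trace_nonneg

lemma trace_mul_le_trace_of_posSemidef_one_sub [DecidableEq n] (hA : (1 - A).PosSemidef)
    (hB : B.PosSemidef) : (A * B).trace ≤ B.trace := by
  simpa [Matrix.sub_mul, trace_sub] using hA.trace_mul_nonneg hB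

lemma sum_kronecker {ι l m n' p R : Type*} [CommSemiring R] (s : Finset ι)
    (A : ι → Matrix l m R) (B : Matrix n' p R) :
    (∑ i ∈ s, A i) ⊗ₖ B = ∑ i ∈ s, A i ⊗ₖ B :=
  map_sum ((kroneckerBilinear (R := R) (α := R)).flip B) A s

lemma trace_mul_single_kronecker {α β R : Type*} [Fintype α] [Fintype β] [DecidableEq α]
    [CommSemiring R] (Q : Matrix (α × β) (α × β) R) (a : α) (B : Matrix β β R) :
    (Q * (single a a 1 ⊗ₖ B)).trace = (Q.submatrix (Prod.mk a) (Prod.mk a) * B).trace := by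
  simp [trace, mul_apply, Fintype.sum_prod_type, single_apply, ite_and]

lemma re_trace_mul_sum_ofReal_smul {ι : Type*} [Fintype ι] (A : Matrix n n ℂ) (w : ι → ℝ)
    (B : ι → Matrix n n ℂ) :
    (A * ∑ i, (w i : ℂ) • B i).trace.re = ∑ i, w i * (A * B i).trace.re := by
  simp [Finset.mul_sum, trace_sum, Complex.re_sum]

end Matrix

section testOp

variable {d : ℕ} {X : Type} [Fintype X] [DecidableEq X] (Q : Matrix (X × Fin d) (X × Fin d) ℂ)

lemma testOp_eq_submatrix (x : X) : testOp Q x = Q.submatrix (Prod.mk x) (Prod.mk x) := by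
  ext i j
  simp [testOp, traceLeft, mul_apply, Fintype.sum_prod_type, single_apply, one_apply, ite_and]

variable {Q}

lemma posSemidef_testOp (hQ : Q.PosSemidef) (x : X) : (testOp Q x).PosSemidef := by
  rw [testOp_eq_submatrix]; exact hQ.submatrix _

lemma posSemidef_one_sub_testOp (hQI : (1 - Q).PosSemidef) (x : X) :
    (1 - testOp Q x).PosSemidef := by
  convert hQI.submatrix (Prod.mk x) using 1
  rw [testOp_eq_submatrix, ← submatrix_one _ (Prod.mk_right_injective x)]
  rfl

end testOp

section Codebook

variable {X ι : Type*} [Fintype X] [Fintype ι] [DecidableEq ι] {p : X → ℝ}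

lemma sum_prod_eq_one (hp1 : ∑ x, p x = 1) : ∑ c : ι → X, ∏ j, p (c j) = 1 := by
  rw [← Fintype.prod_sum]; simp [hp1]

lemma sum_prod_mul_eq_sum_funSplitAt (i : ι) (F : (ι → X) → ℝ) :
    ∑ c : ι → X, (∏ j, p (c j)) * F c =
      ∑ x, p x * ∑ g : {j // j ≠ i} → X,
        (∏ j, p (g j)) * F ((Equiv.funSplitAt i X).symm (x, g)) := by
  rw [← (Equiv.funSplitAt i X).symm.sum_comp, Fintype.sum_prod_type]
  refine Fintype.sum_congr _ _ fun x => ?_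
  rw [Finset.mul_sum]
  refine Fintype.sum_congr _ _ fun g => ?_
  rw [Fintype.prod_eq_mul_prod_subtype_ne _ i, mul_assoc]
  simp [Equiv.funSplitAt_symm_apply, fun j : {j // j ≠ i} => j.2]

lemma sum_prod_mul_apply (hp1 : ∑ x, p x = 1) (i : ι) (h : X → ℝ) :
    ∑ c : ι → X, (∏ j, p (c j)) * h (c i) = ∑ x, p x * h x := by
  simp [sum_prod_mul_eq_sum_funSplitAt i, Equiv.funSplitAt_symm_apply, ← Finset.sum_mul,
    sum_prod_eq_one hp1]

lemma sum_prod_mul_apply_apply (hp1 : ∑ x, p x = 1) {i k : ι} (hik : i ≠ k)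
    (h : X → X → ℝ) :
    ∑ c : ι → X, (∏ j, p (c j)) * h (c i) (c k) = ∑ x, ∑ y, p x * p y * h x y := by
  rw [sum_prod_mul_eq_sum_funSplitAt i]
  refine Fintype.sum_congr _ _ fun x => ?_
  simp [Equiv.funSplitAt_symm_apply, hik.symm,
    sum_prod_mul_apply hp1 (⟨k, hik.symm⟩ : {j // j ≠ i}) (h x), Finset.mul_sum, mul_assoc]

lemma sum_prod_mul_one_sub_add_sum_erase (hp1 : ∑ x, p x = 1) (T : X → X → ℝ) (m : ι) :
    ∑ c : ι → X, (∏ j, p (c j)) * (1 - T (c m) (c m) + ∑ j ∈ Finset.univ.erase m, T (c j) (c m))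
      = 1 - ∑ x, p x * T x x
          + (Finset.univ.erase m).card * ∑ x, ∑ y, p x * p y * T x y := by
  simp only [mul_add, mul_sub, mul_one, Finset.mul_sum, Finset.sum_add_distrib,
    Finset.sum_sub_distrib]
  rw [sum_prod_eq_one hp1, sum_prod_mul_apply hp1 m fun x => T x x, Finset.sum_comm,
    Finset.sum_congr rfl fun j hj => sum_prod_mul_apply_apply hp1 (Finset.ne_of_mem_erase hj) T]
  simp [Finset.mul_sum]

end Codebook

lemma Real.sum_mul_sqrt_le_sqrt_sum_mul {ι : Type*} (s : Finset ι) {w f : ι → ℝ}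
    (hw0 : ∀ i ∈ s, 0 ≤ w i) (hw1 : ∑ i ∈ s, w i = 1) (hf : ∀ i ∈ s, 0 ≤ f i) :
    ∑ i ∈ s, w i * √(f i) ≤ √(∑ i ∈ s, w i * f i) :=
  Real.strictConcaveOn_sqrt.concaveOn.le_map_sum hw0 hw1 hf

theorem sum_prod_mul_two_mul_sqrt_le {X ι : Type*} [Fintype X] [Fintype ι] [DecidableEq ι]
    {p : X → ℝ} (hp0 : ∀ x, 0 ≤ p x) (hp1 : ∑ x, p x = 1) (T : X → X → ℝ)
    (hT0 : ∀ x y, 0 ≤ T x y) (hT1 : ∀ x, T x x ≤ 1) (m : ι) {ε' : ℝ}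
    (hε' : 1 - ε' ≤ ∑ x, p x * T x x) :
    ∑ c : ι → X, (∏ j, p (c j)) *
        (2 * √(1 - T (c m) (c m) + ∑ j ∈ Finset.univ.erase m, T (c j) (c m)))
      ≤ 2 * √(ε' + Fintype.card ι * ∑ x, ∑ y, p x * p y * T x y) := by
  have hS : 0 ≤ ∑ x, ∑ y, p x * p y * T x y :=
    Finset.sum_nonneg fun x _ => Finset.sum_nonneg fun y _ =>
      mul_nonneg (mul_nonneg (hp0 x) (hp0 y)) (hT0 x y)
  calc _ = 2 * ∑ c : ι → X, (∏ j, p (c j)) *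
          √(1 - T (c m) (c m) + ∑ j ∈ Finset.univ.erase m, T (c j) (c m)) := by
        simp_rw [Finset.mul_sum, mul_left_comm]
    _ ≤ 2 * √(∑ c : ι → X, (∏ j, p (c j)) *
          (1 - T (c m) (c m) + ∑ j ∈ Finset.univ.erase m, T (c j) (c m))) := by
        gcongr
        refine Real.sum_mul_sqrt_le_sqrt_sum_mul _ (fun c _ => ?_) (sum_prod_eq_one hp1)
          fun c _ => ?_
        · exact Finset.prod_nonneg fun j _ => hp0 (c j)
        · have := hT1 (c m)
          have := Finset.sum_nonneg fun j (_ : j ∈ Finset.univ.erase m) => hT0 (c j) (c m)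
          linarith
    _ ≤ 2 * √(ε' + Fintype.card ι * ∑ x, ∑ y, p x * p y * T x y) := by
        rw [sum_prod_mul_one_sub_add_sum_erase hp1]
        have : ((Finset.univ.erase m).card : ℝ) ≤ Fintype.card ι := by
          exact_mod_cast Finset.card_erase_le
        gcongr
        linarith [mul_le_mul_of_nonneg_right this hS]

/-- **The averaging (random-coding) step of the one-shot achievability proof.**
For a distribution `p` on `X`, states `ρ_x`, an operator `0 ≤ Q ≤ I` with
`Tr (Q ρ_{XB}) ≥ 1 − ε′` and `A_x = Tr_X ((|x⟩⟨x| ⊗ I) Q)`, the expectation over i.i.d.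
codebooks `(x₁, …, x_M) ∼ p^{×M}` of
`2 √(1 − Tr (A_{x_m} ρ_{x_m}) + ∑_{j ≠ m} Tr (A_{x_j} ρ_{x_m}))`
for any fixed message `m` is at most `2 √(ε′ + M Tr (Q (ρ_X ⊗ ρ_B)))`. -/
theorem random_codebook_averaging {d : ℕ} {X : Type} [Fintype X] [DecidableEq X]
    (p : X → ℝ) (hp0 : ∀ x, 0 ≤ p x) (hp1 : ∑ x, p x = 1)
    (ρ : X → Matrix (Fin d) (Fin d) ℂ)
    (hρ : ∀ x, (ρ x).PosSemidef) (hρtr : ∀ x, (ρ x).trace = 1)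
    (Q : Matrix (X × Fin d) (X × Fin d) ℂ)
    (hQ : Q.PosSemidef) (hQI : ((1 : Matrix (X × Fin d) (X × Fin d) ℂ) - Q).PosSemidef)
    (ε' : ℝ)
    (hQρ : 1 - ε' ≤ (Q * ∑ x, (p x : ℂ) • (Matrix.single x x (1 : ℂ) ⊗ₖ ρ x)).trace.re)
    {M : ℕ} (m : Fin M) :
    ∑ c : Fin M → X, (∏ j, p (c j)) *
        (2 * Real.sqrt (1 - (testOp Q (c m) * ρ (c m)).trace.re
          + ∑ j ∈ Finset.univ.erase m, (testOp Q (c j) * ρ (c m)).trace.re))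
      ≤ 2 * Real.sqrt (ε' + M *
          (Q * ((∑ x, (p x : ℂ) • Matrix.single x x (1 : ℂ)) ⊗ₖ
            (∑ x, (p x : ℂ) • ρ x))).trace.re) := by
  set T : X → X → ℝ := fun x y => (testOp Q x * ρ y).trace.re
  have hT0 (x y : X) : 0 ≤ T x y :=
    (Complex.le_def.mp ((posSemidef_testOp hQ x).trace_mul_nonneg (hρ y))).1
  have hT1 (x : X) : T x x ≤ 1 := by
    simpa [hρtr] using (Complex.le_def.mp
      (trace_mul_le_trace_of_posSemidef_one_sub (posSemidef_one_sub_testOp hQI x) (hρ x))).1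
  have hdiag : (Q * ∑ x, (p x : ℂ) • (single x x 1 ⊗ₖ ρ x)).trace.re = ∑ x, p x * T x x := by
    rw [re_trace_mul_sum_ofReal_smul]
    simp only [T, trace_mul_single_kronecker, testOp_eq_submatrix]
  have hcross : (Q * ((∑ x, (p x : ℂ) • single x x (1 : ℂ)) ⊗ₖ ∑ x, (p x : ℂ) • ρ x)).trace.re
      = ∑ x, ∑ y, p x * p y * T x y := by
    simp_rw [sum_kronecker, smul_kronecker, re_trace_mul_sum_ofReal_smul,
      trace_mul_single_kronecker, ← testOp_eq_submatrix, re_trace_mul_sum_ofReal_smul,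
      Finset.mul_sum, mul_assoc]
    rfl
  rw [hcross]
  simpa using sum_prod_mul_two_mul_sqrt_le hp0 hp1 T hT0 hT1 m (hdiag ▸ hQρ)
end
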